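/- Let A be a balanced residuated poset satisfying (H4) and (H5), and write 1_x for the common value x\x = x/x. Then for all a, b ∈ A, setting s = 1_a·1_b, we have: a ≤ b if and only if s·a ≤ s\b. -/
import Mathlib


/-- A residuated poset: a partially ordered monoid with residuals `ld` (`x \ z`)
and `rd` (`z / y`) satisfying the residuation law. -/
class ResiduatedPoset (α : Type*) extends PartialOrder α, Monoid α where
  ld : α → α → α
  rd : α → α → α
  mul_le_iff_le_rd : ∀ x y z : α, x * y ≤ z ↔ x ≤ rd z y
  mul_le_iff_le_ld : ∀ x y z : α, x * y ≤ z ↔ y ≤ ld x z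

open ResiduatedPoset

section Aux

variable {α : Type*} [ResiduatedPoset α]

lemma RP.mul_le_mul_left' {x y : α} (z : α) (h : x ≤ y) : z * x ≤ z * y := by
  rw [mul_le_iff_le_ld]
  exact le_trans h ((mul_le_iff_le_ld z y (z * y)).mp le_rfl)

lemma RP.mul_le_mul_right' {x y : α} (z : α) (h : x ≤ y) : x * z ≤ y * z := by
  rw [mul_le_iff_le_rd]
  exact le_trans h ((mul_le_iff_le_rd y z (y * z)).mp le_rfl)

lemma RP.one_le_unit (x : α) : (1 : α) ≤ rd x x :=
  (mul_le_iff_le_rd 1 x x).mp (by simp)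

lemma RP.unit_mul_le (x : α) : rd x x * x ≤ x :=
  (mul_le_iff_le_rd _ x x).mpr le_rfl

lemma RP.mul_ld_le (x : α) : x * ld x x ≤ x :=
  (mul_le_iff_le_ld x _ x).mpr le_rfl

/-- The unit `1_x = rd x x` is idempotent. -/
lemma RP.unit_idem (x : α) : rd x x * rd x x = rd x x := by
  apply le_antisymm
  · refine (mul_le_iff_le_rd _ x x).mp ?_
    calc (rd x x * rd x x) * x = rd x x * (rd x x * x) := mul_assoc _ _ _
      _ ≤ rd x x * x := RP.mul_le_mul_left' _ (RP.unit_mul_le x)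
      _ ≤ x := RP.unit_mul_le x
  · calc rd x x = 1 * rd x x := (one_mul _).symm
      _ ≤ rd x x * rd x x := RP.mul_le_mul_right' _ (RP.one_le_unit x)

end Aux

theorem stmt_18 {α : Type*} [ResiduatedPoset α] (hbal : ∀ x : α, ld x x = rd x x)
    (hH4 : ∀ x y : α, rd x x * rd y y = rd (x * y) (x * y))
    (hH5 : ∀ x y : α, rd (ld x y) (ld x y) = rd x x * rd y y)
    (a b : α) :
    a ≤ b ↔ (rd a a * rd b b) * a ≤ ld (rd a a * rd b b) b := by
  set s : α := rd a a * rd b b with hs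
  have hsidem : s * s = s := by
    rw [hs, hH4]; exact RP.unit_idem (a * b)
  have hone_le_s : (1 : α) ≤ s := by
    calc (1 : α) = 1 * 1 := (one_mul 1).symm
      _ ≤ rd a a * rd b b :=
        le_trans (RP.mul_le_mul_right' 1 (RP.one_le_unit a))
          (RP.mul_le_mul_left' _ (RP.one_le_unit b))
  constructor
  · intro hab
    -- let w = b / a ; we show s ≤ w, hence s * a ≤ b
    set w : α := rd b a with hw
    have hone_le_w : (1 : α) ≤ w := (mul_le_iff_le_rd 1 a b).mp (by simpa using hab)
    have hwa : w * a ≤ b := (mul_le_iff_le_rd w a b).mpr le_rfl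
    -- 1_a ≤ 1_w  (since w * 1_a ≤ w, using balance)
    have h1a : rd a a ≤ rd w w := by
      rw [← hbal w]
      refine (mul_le_iff_le_ld w (rd a a) w).mp ?_
      have key : (w * rd a a) * a ≤ b := by
        calc (w * rd a a) * a = w * (rd a a * a) := mul_assoc _ _ _
          _ ≤ w * a := RP.mul_le_mul_left' _ (RP.unit_mul_le a)
          _ ≤ b := hwa
      exact le_trans ((mul_le_iff_le_rd (w * rd a a) a b).mp key) (le_of_eq hw.symm)
    -- 1_b ≤ 1_w  (since 1_b * w ≤ w)
    have h1b : rd b b ≤ rd w w := by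
      refine (mul_le_iff_le_rd (rd b b) w w).mp ?_
      have key : (rd b b * w) * a ≤ b := by
        calc (rd b b * w) * a = rd b b * (w * a) := mul_assoc _ _ _
          _ ≤ rd b b * b := RP.mul_le_mul_left' _ hwa
          _ ≤ b := RP.unit_mul_le b
      exact le_trans ((mul_le_iff_le_rd (rd b b * w) a b).mp key) (le_of_eq hw.symm)
    have hsw : s ≤ w := by
      calc s = rd a a * rd b b := hs
        _ ≤ rd w w * rd w w :=
          le_trans (RP.mul_le_mul_right' _ h1a) (RP.mul_le_mul_left' _ h1b)
        _ = rd w w := RP.unit_idem w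
        _ = rd w w * 1 := (mul_one _).symm
        _ ≤ rd w w * w := RP.mul_le_mul_left' _ hone_le_w
        _ ≤ w := RP.unit_mul_le w
    have hsab : s * a ≤ b := (mul_le_iff_le_rd s a b).mpr hsw
    refine (mul_le_iff_le_ld s (s * a) b).mp ?_
    calc s * (s * a) = (s * s) * a := (mul_assoc _ _ _).symm
      _ = s * a := by rw [hsidem]
      _ ≤ b := hsab
  · intro h
    have h2 : s * (s * a) ≤ b := (mul_le_iff_le_ld s (s * a) b).mpr h
    calc a = 1 * (1 * a) := by simp
      _ ≤ s * (s * a) :=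
        le_trans (RP.mul_le_mul_right' _ hone_le_s)
          (RP.mul_le_mul_left' s (RP.mul_le_mul_right' a hone_le_s))
      _ ≤ s * (s * a) := le_rfl
      _ ≤ b := h2
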